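/- Let n, r ≥ 1 be integers, q an odd prime power, and T ∈ M_n(𝔽_q). Then the cardinality of the matrix sphere σ_T satisfies the exact identity (as complex numbers) #σ_T = q^{n²(r−1)} + q^{−n²} · Σ_{S ∈ M_n(𝔽_q), S ≠ 0} ψ(−ST) · G(S,0)^r. -/

import Mathlib

/-!
Detect the equation `‖X‖ = T` by orthogonality of characters,
`[A = T] = q^{-n²} Σ_S ψ(S(A - T))`, and swap the sums. Since `ψ` is additive, the sum over
`X ∈ M_n(𝔽_q)^r` of `ψ(S(X₁² + ⋯ + X_r²))` factors as `G(S,0)^r`; the term `S = 0` contributes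
`q^{-n²} · q^{rn²} = q^{n²(r-1)}`.
-/

open scoped BigOperators

/-- The additive character `ψ(X) = exp((2πi/p)·Tr_{F/F_p}(Tr X))` on `n × n` matrices
over a finite field `F` of characteristic `p`. -/
noncomputable def psi (F : Type) [Field F] [Fintype F] {n : ℕ}
    (X : Matrix (Fin n) (Fin n) F) : ℂ :=
  letI : Algebra (ZMod (ringChar F)) F := ZMod.algebra _ _
  Complex.exp (2 * Real.pi * Complex.I *
    (((Algebra.trace (ZMod (ringChar F)) F X.trace).val : ℂ) / (ringChar F : ℂ)))

/-- The radical `{X : Tr(A(XY+YX)) = 0 for all Y}` of the quadratic form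
`X ↦ Tr(AX²)` on `M_n(F)`. -/
def radical (F : Type) [Field F] [Fintype F] {n : ℕ}
    (A : Matrix (Fin n) (Fin n) F) : Submodule F (Matrix (Fin n) (Fin n) F) where
  carrier := {X : Matrix (Fin n) (Fin n) F |
    ∀ Y : Matrix (Fin n) (Fin n) F, (A * (X * Y + Y * X)).trace = 0}
  zero_mem' := by intro Y; simp
  add_mem' := by
    intro X₁ X₂ h₁ h₂ Y
    have e : A * ((X₁ + X₂) * Y + Y * (X₁ + X₂))
        = A * (X₁ * Y + Y * X₁) + A * (X₂ * Y + Y * X₂) := by noncomm_ring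
    show (A * ((X₁ + X₂) * Y + Y * (X₁ + X₂))).trace = 0
    rw [e, Matrix.trace_add, h₁ Y, h₂ Y, add_zero]
  smul_mem' := by
    intro c X h Y
    have e : A * ((c • X) * Y + Y * (c • X)) = c • (A * (X * Y + Y * X)) := by
      rw [smul_mul_assoc, Matrix.mul_smul, ← smul_add, Matrix.mul_smul]
    show (A * ((c • X) * Y + Y * (c • X))).trace = 0
    rw [e, Matrix.trace_smul, h Y, smul_zero]

/-- The radical invariant `ρ_A`: the `F`-dimension of the radical of `X ↦ Tr(AX²)`. -/
noncomputable def rho (F : Type) [Field F] [Fintype F] {n : ℕ}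
    (A : Matrix (Fin n) (Fin n) F) : ℕ :=
  Module.finrank F (radical F A)

/-- The quadratic matrix Gauss sum `G(A,B) = Σ_X ψ(AX² + BX)`. -/
noncomputable def matGaussSum (F : Type) [Field F] [Fintype F] {n : ℕ}
    (A B : Matrix (Fin n) (Fin n) F) : ℂ :=
  ∑ X : Matrix (Fin n) (Fin n) F, psi F (A * X ^ 2 + B * X)

/-- The matrix sphere `σ_T = {X ∈ M_n(F)^r : X₁² + ⋯ + X_r² = T}`. -/
def matSphere (F : Type) [Field F] [Fintype F] [DecidableEq F] {n : ℕ} (r : ℕ)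
    (T : Matrix (Fin n) (Fin n) F) : Finset (Fin r → Matrix (Fin n) (Fin n) F) :=
  Finset.univ.filter (fun X => ∑ i, (X i) ^ 2 = T)

/-- The Fourier transform `f̂(M) = q^{-rn²} Σ_A f(A) conj(ψ(M·A))` on `M_n(F)^r`. -/
noncomputable def matFourier (F : Type) [Field F] [Fintype F] {n r : ℕ}
    (f : (Fin r → Matrix (Fin n) (Fin n) F) → ℂ)
    (M : Fin r → Matrix (Fin n) (Fin n) F) : ℂ :=
  ((Fintype.card F : ℂ) ^ (r * n ^ 2))⁻¹ *
    ∑ A : Fin r → Matrix (Fin n) (Fin n) F, f A * (starRingEnd ℂ) (psi F (∑ i, M i * A i))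

open Matrix

lemma card_matrix (m R : Type*) [Fintype m] [DecidableEq m] [Fintype R] :
    Fintype.card (Matrix m m R) = Fintype.card R ^ (Fintype.card m ^ 2) := by
  rw [Fintype.card_congr Matrix.of.symm, Fintype.card_fun, Fintype.card_fun, sq, pow_mul]

section Character

variable {F : Type} [Field F] [Fintype F] {n : ℕ}

lemma neZero_ringChar : NeZero (ringChar F) := ⟨(CharP.char_is_prime F _).ne_zero⟩

attribute [local instance] neZero_ringChar ZMod.algebra

noncomputable def psiChar : AddChar (Matrix (Fin n) (Fin n) F) ℂ :=
  ZMod.stdAddChar.compAddMonoidHom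
    ((Algebra.trace (ZMod (ringChar F)) F).toAddMonoidHom.comp (traceAddMonoidHom (Fin n) F))

lemma psiChar_apply (X : Matrix (Fin n) (Fin n) F) : psiChar X = psi F X := by
  simp only [psiChar, AddChar.compAddMonoidHom_apply, AddMonoidHom.coe_comp,
    Function.comp_apply, traceAddMonoidHom_apply, LinearMap.toAddMonoidHom_coe,
    ZMod.stdAddChar_apply, ZMod.toCircle_apply, psi]
  ring_nf

lemma psi_zero : psi F (0 : Matrix (Fin n) (Fin n) F) = 1 := by
  rw [← psiChar_apply, AddChar.map_zero_eq_one]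

lemma psi_add (X Y : Matrix (Fin n) (Fin n) F) : psi F (X + Y) = psi F X * psi F Y := by
  simp only [← psiChar_apply, AddChar.map_add_eq_mul]

lemma psi_sum {ι : Type*} (s : Finset ι) (X : ι → Matrix (Fin n) (Fin n) F) :
    psi F (∑ i ∈ s, X i) = ∏ i ∈ s, psi F (X i) := by
  induction s using Finset.cons_induction with
  | empty => simp [psi_zero]
  | cons a s ha ih => rw [Finset.sum_cons, Finset.prod_cons, psi_add, ih]

lemma exists_psi_mul_ne_one {A : Matrix (Fin n) (Fin n) F} (hA : A ≠ 0) :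
    ∃ S, psi F (S * A) ≠ 1 := by
  obtain ⟨i, j, hij⟩ : ∃ i j, A i j ≠ 0 := by simpa [← Matrix.ext_iff] using hA
  obtain ⟨b, hb⟩ := FiniteField.trace_to_zmod_nondegenerate F hij
  refine ⟨single j i b, fun h => hb (ZMod.injective_stdAddChar ?_)⟩
  rw [← psiChar_apply] at h
  simpa [psiChar, trace_single_mul, mul_comm] using h

lemma sum_psi_mul_eq_ite (A : Matrix (Fin n) (Fin n) F) [Decidable (A = 0)] :
    ∑ S : Matrix (Fin n) (Fin n) F, psi F (S * A)
      = if A = 0 then (Fintype.card F : ℂ) ^ (n ^ 2) else 0 := by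
  let χ := psiChar.compAddMonoidHom (AddMonoidHom.mulRight A)
  have hχ : χ = 0 ↔ A = 0 := by
    refine ⟨fun h => by_contra fun hA => ?_, fun h => ?_⟩
    · obtain ⟨S, hS⟩ := exists_psi_mul_ne_one hA
      exact hS (by simpa [χ, psiChar_apply] using AddChar.eq_zero_iff.1 h S)
    · ext S
      simp [χ, h]
  calc ∑ S, psi F (S * A) = ∑ S, χ S := by simp [χ, psiChar_apply]
    _ = _ := by
      rw [AddChar.sum_eq_ite, card_matrix, Fintype.card_fin, Nat.cast_pow]
      exact if_congr hχ rfl rfl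

end Character

section Counting

variable {F : Type} [Field F] [Fintype F] {n : ℕ}

lemma card_pow_ne_zero : (Fintype.card F : ℂ) ^ (n ^ 2) ≠ 0 :=
  pow_ne_zero _ (Nat.cast_ne_zero.2 Fintype.card_ne_zero)

lemma ite_eq_inv_mul_sum_psi [DecidableEq F] (A T : Matrix (Fin n) (Fin n) F) :
    (if A = T then (1 : ℂ) else 0)
      = ((Fintype.card F : ℂ) ^ (n ^ 2))⁻¹ * ∑ S : Matrix (Fin n) (Fin n) F, psi F (S * (A - T)) := by
  simp only [sum_psi_mul_eq_ite, sub_eq_zero]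
  split_ifs
  · exact (inv_mul_cancel₀ card_pow_ne_zero).symm
  · exact (mul_zero _).symm

lemma sum_psi_mul_sum_sq (r : ℕ) (S : Matrix (Fin n) (Fin n) F) :
    ∑ X : Fin r → Matrix (Fin n) (Fin n) F, psi F (S * ∑ i, X i ^ 2) = matGaussSum F S 0 ^ r := by
  simp only [matGaussSum, Matrix.zero_mul, add_zero, Fintype.sum_pow, Finset.mul_sum, psi_sum]

lemma matGaussSum_zero_zero : matGaussSum F (0 : Matrix (Fin n) (Fin n) F) 0
    = (Fintype.card F : ℂ) ^ (n ^ 2) := by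
  simp [matGaussSum, psi_zero, card_matrix]

lemma card_matSphere_eq_sum_psi_mul_matGaussSum [DecidableEq F] (r : ℕ)
    (T : Matrix (Fin n) (Fin n) F) :
    ((matSphere F r T).card : ℂ) = ((Fintype.card F : ℂ) ^ (n ^ 2))⁻¹ *
      ∑ S : Matrix (Fin n) (Fin n) F, psi F (-(S * T)) * matGaussSum F S 0 ^ r := by
  calc ((matSphere F r T).card : ℂ)
      = ∑ X : Fin r → Matrix (Fin n) (Fin n) F, if ∑ i, X i ^ 2 = T then (1 : ℂ) else 0 := by
        rw [matSphere, Finset.natCast_card_filter]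
    _ = ((Fintype.card F : ℂ) ^ (n ^ 2))⁻¹ * ∑ S : Matrix (Fin n) (Fin n) F,
          ∑ X : Fin r → Matrix (Fin n) (Fin n) F, psi F (S * (∑ i, X i ^ 2 - T)) := by
        simp only [ite_eq_inv_mul_sum_psi, ← Finset.mul_sum, Finset.sum_comm (γ := Fin r → _)]
    _ = _ := by
        simp only [sub_eq_neg_add, Matrix.mul_add, Matrix.mul_neg, psi_add, ← Finset.mul_sum,
          sum_psi_mul_sum_sq]

end Counting

theorem matSphere_card_identity_general (n r : ℕ) (hr : 1 ≤ r)
    (F : Type) [Field F] [Fintype F] [DecidableEq F]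
    (T : Matrix (Fin n) (Fin n) F) :
    ((matSphere F r T).card : ℂ) =
      (Fintype.card F : ℂ) ^ (n ^ 2 * (r - 1)) +
        ((Fintype.card F : ℂ) ^ (n ^ 2))⁻¹ *
          ∑ S ∈ Finset.univ.filter (fun S : Matrix (Fin n) (Fin n) F => S ≠ 0),
            psi F (-(S * T)) * (matGaussSum F S 0) ^ r := by
  obtain ⟨r, rfl⟩ := Nat.exists_eq_add_of_le' hr
  rw [card_matSphere_eq_sum_psi_mul_matGaussSum, Finset.filter_ne',
    ← Finset.add_sum_erase _ _ (Finset.mem_univ 0), Matrix.zero_mul, neg_zero, psi_zero, one_mul,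
    matGaussSum_zero_zero, pow_succ' _ r, mul_add, inv_mul_cancel_left₀ card_pow_ne_zero,
    ← pow_mul, Nat.add_sub_cancel]

/-- Lemma 3.5, equation (3.4): the exact counting identity
`#σ_T = q^{n²(r-1)} + q^{-n²} Σ_{S ≠ 0} ψ(-ST) G(S,0)^r`. -/
theorem matSphere_card_identity (n r : ℕ) (hn : 1 ≤ n) (hr : 1 ≤ r)
    (F : Type) [Field F] [Fintype F] [DecidableEq F]
    (hq : Odd (Fintype.card F)) (T : Matrix (Fin n) (Fin n) F) :
    ((matSphere F r T).card : ℂ) =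
      (Fintype.card F : ℂ) ^ (n ^ 2 * (r - 1)) +
        ((Fintype.card F : ℂ) ^ (n ^ 2))⁻¹ *
          ∑ S ∈ Finset.univ.filter (fun S : Matrix (Fin n) (Fin n) F => S ≠ 0),
            psi F (-(S * T)) * (matGaussSum F S 0) ^ r :=
  matSphere_card_identity_general n r hr F T
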